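/- Let δ ≥ 2 and s be integers with δ + 1 ≤ s ≤ (n−1)/2 and n ≥ 8δ. Then for every real number x ≥ n + δ, x² + (2n − 5s − 5δ + 1)x − sn − δn + 2n + 2s² + 2δs − 5s + 2δ² − 5δ > 0. -/

import Mathlib

open SimpleGraph Finset

/-- The distance matrix of a graph: the `(i,j)` entry is the graph distance from `i` to `j`. -/
noncomputable def distMatrix {V : Type*} [Fintype V] (G : SimpleGraph V) : Matrix V V ℝ :=
  fun i j => (G.dist i j : ℝ)

/-- The distance spectral radius `λ₁(D(G))`: the largest eigenvalue of the distance matrix. -/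
noncomputable def distSpecRad {V : Type*} [Fintype V] (G : SimpleGraph V) : ℝ :=
  sSup {μ : ℝ | ∃ v : V → ℝ, v ≠ 0 ∧ (distMatrix G).mulVec v = μ • v}

/-- The join `G ∨ H` of two graphs: all edges between the parts are added. -/
def graphJoin {α β : Type*} (G : SimpleGraph α) (H : SimpleGraph β) :
    SimpleGraph (α ⊕ β) where
  Adj x y :=
    match x, y with
    | Sum.inl a, Sum.inl a' => G.Adj a a'
    | Sum.inr b, Sum.inr b' => H.Adj b b'
    | Sum.inl _, Sum.inr _ => True
    | Sum.inr _, Sum.inl _ => True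
  symm := ⟨by rintro (a | a) (b | b) h <;> first | exact G.adj_symm h | exact H.adj_symm h | trivial⟩
  loopless := ⟨by rintro (a | a) h <;> first | exact G.loopless.irrefl a h | exact H.loopless.irrefl a h⟩

/-- The disjoint union `G + H` of two graphs. -/
def graphSum {α β : Type*} (G : SimpleGraph α) (H : SimpleGraph β) :
    SimpleGraph (α ⊕ β) where
  Adj x y :=
    match x, y with
    | Sum.inl a, Sum.inl a' => G.Adj a a'
    | Sum.inr b, Sum.inr b' => H.Adj b b'
    | _, _ => False
  symm := ⟨by rintro (a | a) (b | b) h <;> first | exact G.adj_symm h | exact H.adj_symm h | exact h⟩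
  loopless := ⟨by rintro (a | a) h <;> first | exact G.loopless.irrefl a h | exact H.loopless.irrefl a h⟩

/-- `m` pairwise disjoint copies of the complete graph `K_p`. -/
def repK (m p : ℕ) : SimpleGraph (Fin m × Fin p) where
  Adj x y := x.1 = y.1 ∧ x ≠ y
  symm := ⟨fun _ _ h => ⟨h.1.symm, h.2.symm⟩⟩
  loopless := ⟨fun _ h => h.2 rfl⟩

/-- The disjoint union of cliques `K_{m 0} + K_{m 1} + ⋯`. -/
def cliquesGraph {c : ℕ} (m : Fin c → ℕ) : SimpleGraph (Σ i, Fin (m i)) where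
  Adj x y := x.1 = y.1 ∧ x ≠ y
  symm := ⟨fun _ _ h => ⟨h.1.symm, h.2.symm⟩⟩
  loopless := ⟨fun _ h => h.2 rfl⟩

/-- `G` is `t`-tough: whenever deleting a vertex set `S` disconnects the graph,
`|S| ≥ t · c(G - S)`. -/
def IsTTough {V : Type*} [Fintype V] (t : ℝ) (G : SimpleGraph V) : Prop :=
  ∀ S : Finset V, ¬ (G.induce ((S : Set V)ᶜ)).Connected →
    t * Nat.card (G.induce ((S : Set V)ᶜ)).ConnectedComponent ≤ (S.card : ℝ)

/-!
Over `x ≥ n + δ` the quadratic is increasing, since its derivative there is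
`4n - 3δ - 5s + 1 > 0`; so it suffices to check its value at `x = n + δ`. That value is a
convex quadratic in `s` whose vertex lies to the right of `(n - 1)/2`, so on `s ≤ (n - 1)/2` it
is smallest at `s = (n - 1)/2`, where it equals `n (n - 7δ)/2 - 2δ² + 5(n - δ)/2 + 3`, positive
for `n ≥ 8δ`.
-/

section

variable {R : Type*} [CommRing R] [LinearOrder R] [IsStrictOrderedRing R]

theorem sq_add_mul_le_sq_add_mul {a b x : R} (hax : a ≤ x) (hb : 0 ≤ 2 * a + b) :
    a ^ 2 + b * a ≤ x ^ 2 + b * x := by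
  have hfactor : x ^ 2 + b * x - (a ^ 2 + b * a) = (x - a) * (x + a + b) := by ring
  nlinarith [mul_nonneg (sub_nonneg.2 hax) (by linarith : (0 : R) ≤ x + a + b)]

/-- The bracket in `P(R_δ, x) - P(R_s, x) = (s - δ) · distQuotientGap n s δ x`. -/
def distQuotientGap (n s δ x : R) : R :=
  x ^ 2 + (2 * n - 5 * s - 5 * δ + 1) * x
    - s * n - δ * n + 2 * n + 2 * s ^ 2 + 2 * δ * s - 5 * s + 2 * δ ^ 2 - 5 * δ

theorem distQuotientGap_at_add_le {n s δ x : R} (hx : n + δ ≤ x)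
    (hderiv : 0 ≤ 4 * n - 3 * δ - 5 * s + 1) :
    distQuotientGap n s δ (n + δ) ≤ distQuotientGap n s δ x := by
  have hmono := sq_add_mul_le_sq_add_mul (b := 2 * n - 5 * s - 5 * δ + 1) hx (by linarith)
  unfold distQuotientGap
  linarith

theorem distQuotientGap_at_add_pos {n s δ : R} (hδ : 0 ≤ δ) (hs : 2 * s + 1 ≤ n)
    (hn : 8 * δ ≤ n) :
    0 < distQuotientGap n s δ (n + δ) := by
  have hvalue : distQuotientGap n s δ (n + δ) =
      3 * n ^ 2 - 6 * s * n - 2 * n * δ + 2 * s ^ 2 - 3 * s * δ - 2 * δ ^ 2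
        + 3 * n - 4 * δ - 5 * s := by
    unfold distQuotientGap; ring
  have hdecr : 0 ≤ (n - 1 - 2 * s) * (5 * n + 3 * δ + 6 - 2 * s) :=
    mul_nonneg (by linarith) (by linarith)
  have hn_sq : 0 ≤ n * (n - 8 * δ) := mul_nonneg (by linarith) (by linarith)
  rw [hvalue]
  nlinarith

theorem distQuotientGap_pos {n s δ x : R} (hδ : 0 ≤ δ) (hs : 2 * s + 1 ≤ n)
    (hn : 8 * δ ≤ n) (hx : n + δ ≤ x) : 0 < distQuotientGap n s δ x :=
  (distQuotientGap_at_add_pos hδ hs hn).trans_le (distQuotientGap_at_add_le hx (by linarith))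

end

theorem stmt19_general (δ s n : ℕ) (hs2 : 2 * s + 1 ≤ n)
    (hn : 8 * δ ≤ n) :
    ∀ x : ℝ, (n : ℝ) + (δ : ℝ) ≤ x →
      0 < x ^ 2 + (2 * (n : ℝ) - 5 * (s : ℝ) - 5 * (δ : ℝ) + 1) * x
        - (s : ℝ) * (n : ℝ) - (δ : ℝ) * (n : ℝ) + 2 * (n : ℝ) + 2 * (s : ℝ) ^ 2
        + 2 * (δ : ℝ) * (s : ℝ) - 5 * (s : ℝ) + 2 * (δ : ℝ) ^ 2 - 5 * (δ : ℝ) := fun x hx =>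
  distQuotientGap_pos (Nat.cast_nonneg δ) (by exact_mod_cast hs2) (by exact_mod_cast hn) hx

theorem stmt19 (δ s n : ℕ) (hδ : 2 ≤ δ) (hs : δ + 1 ≤ s) (hs2 : 2 * s + 1 ≤ n)
    (hn : 8 * δ ≤ n) :
    ∀ x : ℝ, (n : ℝ) + (δ : ℝ) ≤ x →
      0 < x ^ 2 + (2 * (n : ℝ) - 5 * (s : ℝ) - 5 * (δ : ℝ) + 1) * x
        - (s : ℝ) * (n : ℝ) - (δ : ℝ) * (n : ℝ) + 2 * (n : ℝ) + 2 * (s : ℝ) ^ 2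
        + 2 * (δ : ℝ) * (s : ℝ) - 5 * (s : ℝ) + 2 * (δ : ℝ) ^ 2 - 5 * (δ : ℝ) :=
  stmt19_general δ s n hs2 hn
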